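/- Let 𝒢 and 𝒦 be groupoids and X a (𝒢_α,𝒦_β)-set via α=(X_g,α_g)_{g∈𝒢} and β=(Y_k,β_k)_{k∈𝒦} such that X is a split 𝒦-set. Then the set O^𝒦 of 𝒦-orbits of X is a 𝒢-set via λ=(O_g^𝒦, λ_g)_{g∈𝒢}, where O_g^𝒦 = {o(x) : x ∈ X_g} and λ_g(o(x)) = o(α_g(x)) for o(x) ∈ O_{g⁻¹}^𝒦 (in particular λ_g is well defined), and the map φ : X → O^𝒦, φ(x) = o(x), is a surjective morphism of 𝒢-sets. -/

import Mathlib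

open scoped Classical

noncomputable section

universe u v w

/-- A groupoid, presented as a set of morphisms with partially defined
composition.  `s g` is the domain (source) identity `d(g)`, `t g` the range
(target) identity `r(g)`; `mul g h` is the composite `gh`, meaningful when
`s g = t h`. -/
structure Gpd (G : Type u) where
  s : G → G
  t : G → G
  inv : G → G
  mul : G → G → G
  s_s : ∀ g, s (s g) = s g
  t_s : ∀ g, t (s g) = s g
  s_t : ∀ g, s (t g) = t g
  t_t : ∀ g, t (t g) = t g
  s_mul : ∀ g h, s g = t h → s (mul g h) = s h
  t_mul : ∀ g h, s g = t h → t (mul g h) = t g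
  mul_assoc : ∀ g h l, s g = t h → s h = t l → mul (mul g h) l = mul g (mul h l)
  mul_src : ∀ g, mul g (s g) = g
  tgt_mul : ∀ g, mul (t g) g = g
  s_inv : ∀ g, s (inv g) = t g
  t_inv : ∀ g, t (inv g) = s g
  inv_mul : ∀ g, mul (inv g) g = s g
  mul_inv : ∀ g, mul g (inv g) = t g

namespace Gpd

variable {G : Type u}

/-- `e` is an object (identity) of the groupoid. -/
def obj (𝒢 : Gpd G) (e : G) : Prop := 𝒢.s e = e

/-- The set `𝒢₀` of objects of the groupoid. -/
def Objs (𝒢 : Gpd G) : Set G := {e | 𝒢.obj e}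

end Gpd

/-- An action `α = (X_g, α_g)` of a groupoid `𝒢` on a set `X`:
`car g` is the subset `X_g` and `act g` restricts to the bijection
`α_g : X_{g⁻¹} → X_g`. -/
structure GpdSetAction {G : Type u} (𝒢 : Gpd G) (X : Type v) where
  car : G → Set X
  act : G → X → X
  car_t : ∀ g, car g = car (𝒢.t g)
  bijOn : ∀ g, Set.BijOn (act g) (car (𝒢.inv g)) (car g)
  act_id : ∀ e, 𝒢.obj e → ∀ x ∈ car e, act e x = x
  act_mul : ∀ g h, 𝒢.s g = 𝒢.t h → ∀ x ∈ car (𝒢.inv h),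
    act g (act h x) = act (𝒢.mul g h) x

/-- `X` is a split `𝒢`-set: `X` is the disjoint union of the `X_e`, `e ∈ 𝒢₀`. -/
def GpdSetAction.Split {G : Type u} {𝒢 : Gpd G} {X : Type v} (α : GpdSetAction 𝒢 X) : Prop :=
  ∀ x : X, ∃! e : G, 𝒢.obj e ∧ x ∈ α.car e

/-- The action is fully faithful: if `α_g` fixes some `x ∈ X_g ∩ X_{g⁻¹}`
then `g` is an identity. -/
def GpdSetAction.FullyFaithful {G : Type u} {𝒢 : Gpd G} {X : Type v}
    (α : GpdSetAction 𝒢 X) : Prop :=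
  ∀ g x, x ∈ α.car g ∩ α.car (𝒢.inv g) → α.act g x = x → 𝒢.obj g

/-- A `𝒢`-grading of the `k`-algebra `A`:  `A = ⊕_{g ∈ 𝒢} A_g` with
`A_g A_h ⊆ A_{gh}` for composable `g, h` and `A_g A_h = 0` otherwise. -/
structure GpdGrading {G : Type u} (𝒢 : Gpd G) (k : Type v) (A : Type w)
    [Field k] [Ring A] [Algebra k A] where
  comp : G → Submodule k A
  internal : DirectSum.IsInternal comp
  mul_mem : ∀ g h, 𝒢.s g = 𝒢.t h → ∀ a ∈ comp g, ∀ b ∈ comp h, a * b ∈ comp (𝒢.mul g h)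
  mul_eq_zero : ∀ g h, 𝒢.s g ≠ 𝒢.t h → ∀ a ∈ comp g, ∀ b ∈ comp h, a * b = 0

/-- The homogeneous component of degree `g` of `a ∈ A`. -/
noncomputable def GpdGrading.proj {G : Type u} {𝒢 : Gpd G} {k : Type v} {A : Type w}
    [Field k] [Ring A] [Algebra k A] (𝒜 : GpdGrading 𝒢 k A) (g : G) (a : A) : A :=
  ((Equiv.ofBijective _ 𝒜.internal).symm a g : A)

/-- `one : G → A` is a family of local units for the grading: each `one e`
(`e ∈ 𝒢₀`) is an identity element of `A_e` and `1_A = Σ_{e ∈ 𝒢₀} 1_e`. -/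
def IsIdFamily {G : Type u} {𝒢 : Gpd G} {k : Type v} {A : Type w}
    [Field k] [Ring A] [Algebra k A] (𝒜 : GpdGrading 𝒢 k A) (one : G → A) : Prop :=
  (∀ e, 𝒢.obj e → one e ∈ 𝒜.comp e ∧ ∀ a ∈ 𝒜.comp e, one e * a = a ∧ a * one e = a) ∧
  (1 : A) = ∑ᶠ e ∈ 𝒢.Objs, one e

/-- The multiplication of the smash product `A #_α^𝒢 X`, defined on the
ambient space of formal sums `Σ a_{(g,x)} δ_{(g,x)}`:
`(a δ_{(g,x)}) (b δ_{(h,y)}) = (a b) δ_{(gh, y)}` when `d(g) = r(h)` and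
`α_h(y) = x`, and `0` otherwise. -/
noncomputable def smashMul {G : Type u} {𝒢 : Gpd G} {X : Type v} {A : Type w} [Ring A]
    (α : GpdSetAction 𝒢 X) (f₁ f₂ : (G × X) →₀ A) : (G × X) →₀ A :=
  f₁.sum fun p a => f₂.sum fun q b =>
    if 𝒢.s p.1 = 𝒢.t q.1 ∧ α.act q.1 q.2 = p.2
    then Finsupp.single (𝒢.mul p.1 q.1, q.2) (a * b) else 0

/-- The underlying set of the smash product `A #_α^𝒢 X = ⊕_{g} ⊕_{x ∈ X_{d(g)}} A_g δ_x`: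
those formal sums whose `(g,x)`-coefficient lies in `A_g`, supported on pairs
with `x ∈ X_{d(g)}`. -/
def smashSet {G : Type u} {𝒢 : Gpd G} {X : Type v} {k : Type*} {A : Type w}
    [Field k] [Ring A] [Algebra k A]
    (α : GpdSetAction 𝒢 X) (𝒜 : GpdGrading 𝒢 k A) : Set ((G × X) →₀ A) :=
  {f | ∀ p : G × X, f p ∈ 𝒜.comp p.1 ∧ (f p ≠ 0 → p.2 ∈ α.car (𝒢.s p.1))}

/-- The identity element `Σ_{e ∈ 𝒢₀} Σ_{x ∈ X_e} 1_e δ_x` of the smash product. -/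
noncomputable def smashOne {G : Type u} {𝒢 : Gpd G} {X : Type v} {A : Type w} [Ring A]
    (α : GpdSetAction 𝒢 X) (one : G → A) : (G × X) →₀ A :=
  ∑ᶠ e ∈ 𝒢.Objs, ∑ᶠ x ∈ α.car e, Finsupp.single ((e, x) : G × X) (one e)

/-- `X` is a `(𝒢_α, 𝒦_β)`-set:  each `Y_k` is `α`-invariant, each `X_g` is
`β`-invariant, and the two actions commute. -/
structure GKCompat {G : Type u} {K : Type*} {𝒢 : Gpd G} {𝒦 : Gpd K} {X : Type v}
    (α : GpdSetAction 𝒢 X) (β : GpdSetAction 𝒦 X) : Prop where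
  alpha_inv : ∀ g κ, α.act g '' (α.car (𝒢.inv g) ∩ β.car κ) ⊆ α.car g ∩ β.car κ
  beta_inv : ∀ g κ, β.act κ '' (α.car g ∩ β.car (𝒦.inv κ)) ⊆ α.car g ∩ β.car κ
  comm : ∀ g κ x, x ∈ α.car (𝒢.inv g) ∩ β.car (𝒦.inv κ) →
    α.act g (β.act κ x) = β.act κ (α.act g x)

/-- The ideal `E_k = A #^𝒢_{θ^k} Y_k = ⊕_g ⊕_{x ∈ Y_k ∩ X_{d(g)}} A_g δ_x`
of the smash product `A #_α^𝒢 X`. -/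
def Eset {G : Type u} {K : Type*} {𝒢 : Gpd G} {𝒦 : Gpd K} {X : Type v}
    {k : Type*} {A : Type w} [Field k] [Ring A] [Algebra k A]
    (α : GpdSetAction 𝒢 X) (β : GpdSetAction 𝒦 X) (𝒜 : GpdGrading 𝒢 k A)
    (κ : K) : Set ((G × X) →₀ A) :=
  {f | f ∈ smashSet α 𝒜 ∧ ∀ p : G × X, f p ≠ 0 → p.2 ∈ β.car κ}

/-- The map `γ_k : E_{k⁻¹} → E_k`, `γ_k(a_g δ_y) = a_g δ_{β_k(y)}`. -/
noncomputable def gammaAct {G : Type u} {K : Type*} {𝒦 : Gpd K} {X : Type v} {A : Type w}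
    [Ring A] (β : GpdSetAction 𝒦 X) (κ : K) (f : (G × X) →₀ A) : (G × X) →₀ A :=
  f.sum fun p a =>
    if p.2 ∈ β.car (𝒦.inv κ) then Finsupp.single ((p.1, β.act κ p.2) : G × X) a else 0

/-- The identity element `𝟏_k = Σ_{e ∈ 𝒢₀} Σ_{x ∈ Y_k ∩ X_e} 1_e δ_x` of `E_k`. -/
noncomputable def OneE {G : Type u} {K : Type*} {𝒢 : Gpd G} {𝒦 : Gpd K} {X : Type v}
    {A : Type w} [Ring A]
    (α : GpdSetAction 𝒢 X) (β : GpdSetAction 𝒦 X) (one : G → A) (κ : K) : (G × X) →₀ A :=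
  ∑ᶠ e ∈ 𝒢.Objs, ∑ᶠ x ∈ (β.car κ ∩ α.car e), Finsupp.single ((e, x) : G × X) (one e)

/-- The `𝒦`-orbit `o(x) = {β_k(x) : k ∈ D_p}` of `x ∈ Y_p`. -/
def orbit {K : Type*} {𝒦 : Gpd K} {X : Type v} (β : GpdSetAction 𝒦 X) (x : X) : Set X :=
  {y | ∃ κ, x ∈ β.car (𝒦.inv κ) ∧ β.act κ x = y}

/-- The set `O^𝒦` of `𝒦`-orbits of `X`. -/
abbrev OrbT {K : Type*} {𝒦 : Gpd K} {X : Type v} (β : GpdSetAction 𝒦 X) : Type v :=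
  {o : Set X // ∃ x, orbit β x = o}

/-- The orbit map `φ : X → O^𝒦`, `φ(x) = o(x)`. -/
def orbMap {K : Type*} {𝒦 : Gpd K} {X : Type v} (β : GpdSetAction 𝒦 X) (x : X) : OrbT β :=
  ⟨orbit β x, ⟨x, rfl⟩⟩

/-- The monomorphism `φ* : A #_λ^𝒢 O^𝒦 → A #_α^𝒢 X` induced by the orbit map,
`φ*(a_g δ_{o(x)}) = Σ_{y ∈ X_{d(g)}, o(y) = o(x)} a_g δ_y`. -/
noncomputable def phiStar {G : Type u} {K : Type*} {𝒢 : Gpd G} {𝒦 : Gpd K} {X : Type v}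
    {A : Type w} [Ring A] (α : GpdSetAction 𝒢 X) (β : GpdSetAction 𝒦 X)
    (f : (G × OrbT β) →₀ A) : (G × X) →₀ A :=
  f.sum fun p a =>
    ∑ᶠ y ∈ {y | y ∈ α.car (𝒢.s p.1) ∧ orbit β y = (p.2 : Set X)},
      Finsupp.single ((p.1, y) : G × X) a

/-!
Because `X` is split as a `𝒦`-set, "lies in the `𝒦`-orbit of" is an equivalence relation, and
because the two actions commute, each `α_g` sends `𝒦`-equivalent points of `X_{g⁻¹}` to
`𝒦`-equivalent points. An action descends along any map whose fibres are respected in this way,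
and the orbit map is such a map.
-/

namespace Gpd

variable {G : Type u} (𝒢 : Gpd G)

lemma obj_s (g : G) : 𝒢.obj (𝒢.s g) := 𝒢.s_s g

lemma inv_inv (g : G) : 𝒢.inv (𝒢.inv g) = g :=
  calc 𝒢.inv (𝒢.inv g) = 𝒢.mul (𝒢.inv (𝒢.inv g)) (𝒢.mul (𝒢.inv g) g) := by
        rw [𝒢.inv_mul, ← 𝒢.t_inv, ← 𝒢.s_inv, 𝒢.mul_src]
    _ = 𝒢.mul (𝒢.mul (𝒢.inv (𝒢.inv g)) (𝒢.inv g)) g :=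
        (𝒢.mul_assoc _ _ _ (by rw [𝒢.s_inv]) (by rw [𝒢.s_inv])).symm
    _ = g := by rw [𝒢.inv_mul, 𝒢.s_inv, 𝒢.tgt_mul]

lemma inv_of_obj {e : G} (he : 𝒢.obj e) : 𝒢.inv e = e := by
  have hte := 𝒢.t_s e
  rw [he] at hte
  calc 𝒢.inv e = 𝒢.mul (𝒢.inv e) (𝒢.s (𝒢.inv e)) := (𝒢.mul_src _).symm
    _ = e := by rw [𝒢.s_inv, hte, 𝒢.inv_mul, he]

end Gpd

namespace GpdSetAction

variable {G : Type u} {𝒢 : Gpd G} {X : Type v} (α : GpdSetAction 𝒢 X)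

lemma car_inv (g : G) : α.car (𝒢.inv g) = α.car (𝒢.s g) := by
  rw [α.car_t, 𝒢.t_inv]

variable {α}

lemma act_mem {g : G} {x : X} (hx : x ∈ α.car (𝒢.inv g)) : α.act g x ∈ α.car g :=
  (α.bijOn g).mapsTo hx

lemma act_mem_car_inv_inv {g : G} {x : X} (hx : x ∈ α.car (𝒢.inv g)) :
    α.act g x ∈ α.car (𝒢.inv (𝒢.inv g)) := by
  rw [𝒢.inv_inv]
  exact act_mem hx

lemma act_inv_act {g : G} {x : X} (hx : x ∈ α.car (𝒢.inv g)) :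
    α.act (𝒢.inv g) (α.act g x) = x := by
  rw [α.act_mul _ _ (𝒢.s_inv g) x hx, 𝒢.inv_mul]
  exact α.act_id _ (𝒢.obj_s g) x (by rwa [← α.car_inv])

lemma act_act_inv {g : G} {x : X} (hx : x ∈ α.car g) : α.act g (α.act (𝒢.inv g) x) = x := by
  have h := act_inv_act (α := α) (g := 𝒢.inv g) (by rwa [𝒢.inv_inv])
  rwa [𝒢.inv_inv] at h

lemma car_inv_mul {g h : G} (hgh : 𝒢.s g = 𝒢.t h) :
    α.car (𝒢.inv (𝒢.mul g h)) = α.car (𝒢.inv h) := by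
  rw [α.car_inv, α.car_inv, 𝒢.s_mul g h hgh]

lemma act_mem_car_inv_of_s_eq_t {g h : G} (hgh : 𝒢.s g = 𝒢.t h) {x : X}
    (hx : x ∈ α.car (𝒢.inv h)) : α.act h x ∈ α.car (𝒢.inv g) := by
  rw [α.car_inv, hgh, ← α.car_t]
  exact act_mem hx

variable {Y : Type w}

variable (α) in
def Respects (φ : X → Y) : Prop :=
  ∀ g, ∀ x ∈ α.car (𝒢.inv g), ∀ y ∈ α.car (𝒢.inv g), φ x = φ y → φ (α.act g x) = φ (α.act g y)

variable (α) in
/-- Outside `φ '' X_{g⁻¹}` the value is an arbitrary placeholder. -/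
def pushAct (φ : X → Y) (g : G) (y : Y) : Y :=
  if h : ∃ x ∈ α.car (𝒢.inv g), φ x = y then φ (α.act g h.choose) else y

variable {φ : X → Y}

lemma pushAct_apply (hφ : α.Respects φ) {g : G} {x : X} (hx : x ∈ α.car (𝒢.inv g)) :
    α.pushAct φ g (φ x) = φ (α.act g x) := by
  have h : ∃ x' ∈ α.car (𝒢.inv g), φ x' = φ x := ⟨x, hx, rfl⟩
  rw [pushAct, dif_pos h]
  exact hφ g _ h.choose_spec.1 x hx h.choose_spec.2

lemma bijOn_pushAct (hφ : α.Respects φ) (g : G) :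
    Set.BijOn (α.pushAct φ g) (φ '' α.car (𝒢.inv g)) (φ '' α.car g) := by
  refine ⟨?_, ?_, ?_⟩
  · rintro _ ⟨x, hx, rfl⟩
    rw [pushAct_apply hφ hx]
    exact Set.mem_image_of_mem φ (act_mem hx)
  · rintro _ ⟨x, hx, rfl⟩ _ ⟨y, hy, rfl⟩ hxy
    rw [pushAct_apply hφ hx, pushAct_apply hφ hy] at hxy
    have := hφ (𝒢.inv g) _ (act_mem_car_inv_inv hx) _ (act_mem_car_inv_inv hy) hxy
    rwa [act_inv_act hx, act_inv_act hy] at this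
  · rintro _ ⟨x, hx, rfl⟩
    have hx' : α.act (𝒢.inv g) x ∈ α.car (𝒢.inv g) := act_mem (by rwa [𝒢.inv_inv])
    exact ⟨_, Set.mem_image_of_mem φ hx', by rw [pushAct_apply hφ hx', act_act_inv hx]⟩

variable (α) in
def pushforward (φ : X → Y) (hφ : α.Respects φ) : GpdSetAction 𝒢 Y where
  car g := φ '' α.car g
  act := α.pushAct φ
  car_t g := by rw [α.car_t g]
  bijOn := bijOn_pushAct hφ
  act_id := by
    rintro e he _ ⟨x, hx, rfl⟩
    rw [pushAct_apply hφ (by rwa [𝒢.inv_of_obj he]), α.act_id e he x hx]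
  act_mul := by
    rintro g h hgh _ ⟨x, hx, rfl⟩
    rw [pushAct_apply hφ hx, pushAct_apply hφ (act_mem_car_inv_of_s_eq_t hgh hx),
      pushAct_apply hφ (by rwa [car_inv_mul hgh]), α.act_mul g h hgh x hx]

end GpdSetAction

section Orbit

variable {K : Type*} {𝒦 : Gpd K} {X : Type v} {β : GpdSetAction 𝒦 X}

lemma mem_orbit_self (hsplit : β.Split) (x : X) : x ∈ orbit β x := by
  obtain ⟨e, ⟨he, hx⟩, -⟩ := hsplit x
  exact ⟨e, by rwa [𝒦.inv_of_obj he], β.act_id e he x hx⟩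

lemma mem_orbit_symm {x y : X} (h : y ∈ orbit β x) : x ∈ orbit β y := by
  obtain ⟨κ, hx, rfl⟩ := h
  exact ⟨𝒦.inv κ, GpdSetAction.act_mem_car_inv_inv hx, GpdSetAction.act_inv_act hx⟩

lemma mem_orbit_trans (hsplit : β.Split) {x y z : X} (hxy : y ∈ orbit β x)
    (hyz : z ∈ orbit β y) : z ∈ orbit β x := by
  obtain ⟨κ, hx, rfl⟩ := hxy
  obtain ⟨μ, hy, rfl⟩ := hyz
  -- `β_κ x` lies in `Y_{d(μ)}` and in `Y_{r(κ)}`, so splitting makes `μ` and `κ` composable.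
  obtain ⟨e, -, he⟩ := hsplit (β.act κ x)
  have hμκ : 𝒦.s μ = 𝒦.t κ := by
    rw [he _ ⟨𝒦.obj_s μ, by rwa [← β.car_inv]⟩,
      he _ ⟨𝒦.s_t κ, by rw [← β.car_t]; exact GpdSetAction.act_mem hx⟩]
  refine ⟨𝒦.mul μ κ, by rwa [GpdSetAction.car_inv_mul hμκ], ?_⟩
  rw [β.act_mul μ κ hμκ x hx]

lemma orbit_eq_of_mem (hsplit : β.Split) {x y : X} (h : y ∈ orbit β x) :
    orbit β x = orbit β y :=
  Set.ext fun _ => ⟨mem_orbit_trans hsplit (mem_orbit_symm h), mem_orbit_trans hsplit h⟩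

lemma orbMap_surjective : Function.Surjective (orbMap β) :=
  fun ⟨_, x, hx⟩ => ⟨x, Subtype.ext hx⟩

lemma GKCompat.respects_orbMap {G : Type u} {𝒢 : Gpd G} {α : GpdSetAction 𝒢 X}
    (hc : GKCompat α β) (hsplit : β.Split) : α.Respects (orbMap β) := by
  intro g x hx y hy hxy
  have hyx : y ∈ orbit β x := by
    rw [show orbit β x = orbit β y from congrArg Subtype.val hxy]
    exact mem_orbit_self hsplit y
  obtain ⟨κ, hxκ, rfl⟩ := hyx
  have hgx : α.act g x ∈ β.car (𝒦.inv κ) := (hc.alpha_inv g _ ⟨x, ⟨hx, hxκ⟩, rfl⟩).2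
  exact Subtype.ext (orbit_eq_of_mem hsplit ⟨κ, hgx, (hc.comm g κ x ⟨hx, hxκ⟩).symm⟩)

end Orbit

/-- If `X` is a `(𝒢_α, 𝒦_β)`-set which is split as a
`𝒦`-set, then the orbit set `O^𝒦` is a `𝒢`-set via
`λ = (O_g^𝒦, λ_g)` with `O_g^𝒦 = {o(x) : x ∈ X_g}` and
`λ_g(o(x)) = o(α_g(x))` (in particular `λ_g` is well defined), and the orbit
map `φ : X → O^𝒦` is a surjective morphism of `𝒢`-sets. -/
theorem orbit_set_is_G_set
    {G : Type u} {K : Type*} (𝒢 : Gpd G) (𝒦 : Gpd K) {X : Type v}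
    (α : GpdSetAction 𝒢 X) (β : GpdSetAction 𝒦 X)
    (hc : GKCompat α β) (hsplitβ : β.Split) :
    ∃ lam : GpdSetAction 𝒢 (OrbT β),
      -- `O_g^𝒦 = {o(x) : x ∈ X_g}`
      (∀ g, lam.car g = {o : OrbT β | ∃ x ∈ α.car g, orbit β x = (o : Set X)}) ∧
      -- `λ_g(o(x)) = o(α_g(x))`, which is well defined
      (∀ g, ∀ x ∈ α.car (𝒢.inv g), lam.act g (orbMap β x) = orbMap β (α.act g x)) ∧
      -- the orbit map is a surjective morphism of `𝒢`-sets
      Function.Surjective (orbMap β) ∧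
      (∀ g, ∀ x ∈ α.car g, orbMap β x ∈ lam.car g) ∧
      (∀ g, ∀ x ∈ α.car (𝒢.inv g), orbMap β (α.act g x) = lam.act g (orbMap β x)) := by
  have hφ := hc.respects_orbMap hsplitβ
  refine ⟨α.pushforward (orbMap β) hφ, fun g => ?_, fun g x hx => α.pushAct_apply hφ hx,
    orbMap_surjective, fun g x hx => Set.mem_image_of_mem _ hx,
    fun g x hx => (α.pushAct_apply hφ hx).symm⟩
  ext o
  exact exists_congr fun x => and_congr_right fun _ => Subtype.ext_iff
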